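/- With the generic wreath-composition setup below, let Y > 0, let α, α' ∈ 𝔛'(O_K;Y), let z_α ∈ K̄ be a root of F_α and z_{α'} ∈ K̄ a root of F_{α'}. Suppose: (i) z_α = z_{α'}; (ii) for every j ∈ [0,k], K(F_{j,α}(z_α)) = K(F_{j,α'}(z_{α'})) as subfields of K̄ (with F_{0,·}(x) := x); and (iii) F_{j,α}(0) = F_{j,α'}(0) for every j ∈ [1,k−1]. Then α = α'. (Equivalently, the map Ψ' sending α to the tuple (z_α; the tower of fields K(F_{j,α}(z_α)); the constant terms F_{1,α}(0),…,F_{k−1,α}(0)) is injective on 𝔛'(O_K;Y).) -/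

import Mathlib

open scoped NumberField Polynomial

/-- The underlying set on which the iterated wreath product `S_{n₁} ≀ S_{n₂} ≀ ⋯` acts. -/
def WreathSpace : List ℕ → Type
  | [] => PUnit
  | n :: l => Fin n × WreathSpace l

/-- The wreath product `S_m ≀ H` of the full symmetric group `S_m` with a permutation
group `H ⊆ Perm β`, realized as the subgroup of `Perm (Fin m × β)` of permutations whose
induced action on the second coordinate is given by an element of `H`. -/
def symWreath {β : Type*} (m : ℕ) (H : Subgroup (Equiv.Perm β)) :
    Subgroup (Equiv.Perm (Fin m × β)) where
  carrier := {π | ∃ τ ∈ H, ∀ p : Fin m × β, (π p).2 = τ p.2}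
  mul_mem' := by
    rintro π₁ π₂ ⟨τ₁, h₁, e₁⟩ ⟨τ₂, h₂, e₂⟩
    exact ⟨τ₁ * τ₂, mul_mem h₁ h₂, fun p => by
      simp only [Equiv.Perm.mul_apply, e₁, e₂]⟩
  one_mem' := ⟨1, one_mem _, fun p => rfl⟩
  inv_mem' := by
    rintro π ⟨τ, hτ, e⟩
    refine ⟨τ⁻¹, inv_mem hτ, fun p => ?_⟩
    have := e (π⁻¹ p)
    rw [show π (π⁻¹ p) = p from π.apply_symm_apply p] at this
    rw [this, show τ⁻¹ (τ (π⁻¹ p).2) = (π⁻¹ p).2 from τ.symm_apply_apply _]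

/-- The iterated wreath product `S_{n₁} ≀ S_{n₂} ≀ ⋯ ≀ S_{n_k}` of symmetric groups, as a
permutation group: `WreathGroup [n₁, …, n_k] = S_{n₁} ≀ (S_{n₂} ≀ (⋯ ≀ S_{n_k}))`. -/
def WreathGroup : (l : List ℕ) → Subgroup (Equiv.Perm (WreathSpace l))
  | [] => ⊤
  | n :: l => symWreath n (WreathGroup l)

/-- The list `(n₁, …, n_k)` of the values of `n` on `1, …, k`. -/
def wreathList (k : ℕ) (n : ℕ → ℕ) : List ℕ := (List.range k).map fun i => n (i + 1)

/-- The house `‖z‖` of an algebraic number `z`: the maximum of `|σ(z)|` over the complex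
embeddings `σ` of any number field containing `z`; equivalently, the maximum of the absolute
values of the complex roots of the minimal polynomial of `z` over `ℚ`. -/
noncomputable def algHouse {F : Type*} [Field F] [CharZero F] (z : F) : ℝ :=
  sSup (Set.range fun w : ((minpoly ℚ z).rootSet ℂ) => ‖(↑w : ℂ)‖)

/-- The polynomial ring `A = O_K[T_{u,v}]` (with an `ℕ × ℕ`-indexed supply of variables;
only the variables `T_{u,v}` with `1 ≤ u ≤ k`, `1 ≤ v ≤ n_u` are used). -/
abbrev WreathCompRing (K : Type*) [Field K] [NumberField K] :=
  MvPolynomial (ℕ × ℕ) (𝓞 K)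

/-- The generic polynomial `g_u(x) = x^(n_u) + Σ_{v=1}^{n_u} T_{u,v} x^(n_u - v)`. -/
noncomputable def wreathGen (K : Type*) [Field K] [NumberField K] (n : ℕ → ℕ) (u : ℕ) :
    Polynomial (WreathCompRing K) :=
  Polynomial.X ^ (n u) +
    ∑ v ∈ Finset.Icc 1 (n u), Polynomial.C (MvPolynomial.X (u, v)) * Polynomial.X ^ (n u - v)

/-- The iterated composition `F_j = g_j(F_{j-1}(x))`, with `F_0 = x` (so `F_1 = g_1`). -/
noncomputable def wreathComp (K : Type*) [Field K] [NumberField K] (n : ℕ → ℕ) :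
    ℕ → Polynomial (WreathCompRing K)
  | 0 => Polynomial.X
  | (j + 1) => (wreathGen K n (j + 1)).comp (wreathComp K n j)

/-- `N_j := n₁ ⋯ n_j`, with `N_0 = 1`. -/
def wreathDeg (n : ℕ → ℕ) (j : ℕ) : ℕ := ∏ v ∈ Finset.Icc 1 j, n v

/-- The specialization `F_{j,α} ∈ O_K[x]` of `F_j` under `Φ_α : T_{u,v} ↦ α_{u,v}`. -/
noncomputable def wreathSpec (K : Type*) [Field K] [NumberField K] (n : ℕ → ℕ)
    (α : ℕ × ℕ → 𝓞 K) (j : ℕ) : Polynomial (𝓞 K) :=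
  (wreathComp K n j).map (MvPolynomial.eval α)

/-- The specialization `F_{j,α}`, viewed as a polynomial with coefficients in `K`. -/
noncomputable def wreathSpecK (K : Type*) [Field K] [NumberField K] (n : ℕ → ℕ)
    (α : ℕ × ℕ → 𝓞 K) (j : ℕ) : Polynomial K :=
  (wreathSpec K n α j).map (algebraMap (𝓞 K) K)

/-- The box `𝔛(O_K; Y)`: vectors `α = (α_{u,v})_{1 ≤ u ≤ k, 1 ≤ v ≤ n_u}` of integers of `K`
with `‖α_{u,v}‖ ≤ Y^(v·N_{u-1})` (coordinates outside the index range are set to `0`). -/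
def wreathBox (K : Type*) [Field K] [NumberField K] (k : ℕ) (n : ℕ → ℕ) (Y : ℝ) :
    Set (ℕ × ℕ → 𝓞 K) :=
  {α | (∀ u ∈ Finset.Icc 1 k, ∀ v ∈ Finset.Icc 1 (n u),
          algHouse ((α (u, v) : K)) ≤ Y ^ (v * wreathDeg n (u - 1))) ∧
        ∀ u v : ℕ, (u ∉ Finset.Icc 1 k ∨ v ∉ Finset.Icc 1 (n u)) → α (u, v) = 0}

/-- The set `𝔛'(O_K; Y)` of `α ∈ 𝔛(O_K; Y)` such that `F_α` is irreducible over `K` and the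
Galois group of its splitting field over `K` is isomorphic to `S(n⃗) = S_{n₁} ≀ ⋯ ≀ S_{n_k}`. -/
def wreathBox' (K : Type*) [Field K] [NumberField K] (k : ℕ) (n : ℕ → ℕ) (Y : ℝ) :
    Set (ℕ × ℕ → 𝓞 K) :=
  {α ∈ wreathBox K k n Y | Irreducible (wreathSpecK K n α k) ∧
    Nonempty ((wreathSpecK K n α k).Gal ≃* WreathGroup (wreathList k n))}


section GenPoly
variable {R S : Type*} [CommRing R] [CommRing S]

noncomputable def genPoly (m : ℕ) (c : ℕ → R) : R[X] :=
  Polynomial.X ^ m + ∑ v ∈ Finset.Icc 1 m, Polynomial.C (c v) * Polynomial.X ^ (m - v)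

lemma genPoly_map (f : R →+* S) (m : ℕ) (c : ℕ → R) :
    (genPoly m c).map f = genPoly m (fun v => f (c v)) := by
  simp [genPoly, Polynomial.map_sum]

lemma genPoly_degree_sum_lt (m : ℕ) (hm : 1 ≤ m) (c : ℕ → R) :
    (∑ v ∈ Finset.Icc 1 m, Polynomial.C (c v) * Polynomial.X ^ (m - v)).degree < ((m : ℕ) : WithBot ℕ) := by
  apply lt_of_le_of_lt (Polynomial.degree_sum_le _ _)
  rw [Finset.sup_lt_iff (by exact_mod_cast WithBot.bot_lt_coe (m:ℕ))]
  intro v hv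
  apply lt_of_le_of_lt (Polynomial.degree_C_mul_X_pow_le _ _)
  exact_mod_cast Nat.sub_lt (by omega) (Finset.mem_Icc.1 hv).1

lemma genPoly_monic [Nontrivial R] (m : ℕ) (hm : 1 ≤ m) (c : ℕ → R) : (genPoly m c).Monic := by
  apply (Polynomial.monic_X_pow m).add_of_left
  rw [Polynomial.degree_X_pow]
  exact genPoly_degree_sum_lt m hm c

lemma genPoly_natDegree [Nontrivial R] (m : ℕ) (hm : 1 ≤ m) (c : ℕ → R) :
    (genPoly m c).natDegree = m := by
  have h := genPoly_degree_sum_lt m hm c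
  rw [← Polynomial.degree_X_pow (R := R)] at h
  rw [genPoly, Polynomial.natDegree_eq_of_degree_eq (Polynomial.degree_add_eq_left_of_degree_lt h),
    Polynomial.natDegree_X_pow]

lemma genPoly_coeff (m : ℕ) (hm : 1 ≤ m) (c : ℕ → R) {v : ℕ} (hv : v ∈ Finset.Icc 1 m) :
    (genPoly m c).coeff (m - v) = c v := by
  obtain ⟨hv1, hv2⟩ := Finset.mem_Icc.1 hv
  rw [genPoly, Polynomial.coeff_add, Polynomial.coeff_X_pow, if_neg (by omega),
    Polynomial.finset_sum_coeff]
  rw [Finset.sum_eq_single v]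
  · simp [Polynomial.coeff_C_mul, Polynomial.coeff_X_pow]
  · intro b hb hbv
    obtain ⟨hb1, hb2⟩ := Finset.mem_Icc.1 hb
    rw [Polynomial.coeff_C_mul, Polynomial.coeff_X_pow, if_neg (by omega), mul_zero]
  · intro h; exact absurd hv h

lemma genPoly_eval (m : ℕ) (c : ℕ → R) (x : R) :
    (genPoly m c).eval x = x ^ m + ∑ v ∈ Finset.Icc 1 m, c v * x ^ (m - v) := by
  simp [genPoly, Polynomial.eval_finset_sum]

end GenPoly

section WreathLemmas
open Polynomial
variable {K : Type*} [Field K] [NumberField K] {n : ℕ → ℕ}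

lemma wreathGen_eq (u : ℕ) :
    wreathGen K n u = genPoly (n u) (fun v => MvPolynomial.X (u, v)) := rfl

lemma wreathSpec_zero (α : ℕ × ℕ → 𝓞 K) : wreathSpec K n α 0 = Polynomial.X := by
  simp [wreathSpec, wreathComp]

lemma wreathSpec_succ (α : ℕ × ℕ → 𝓞 K) (j : ℕ) :
    wreathSpec K n α (j + 1) =
      (genPoly (n (j + 1)) (fun v => α (j + 1, v))).comp (wreathSpec K n α j) := by
  show ((wreathGen K n (j+1)).comp (wreathComp K n j)).map _ = _
  rw [Polynomial.map_comp, wreathGen_eq, genPoly_map]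
  simp [wreathSpec]

lemma wreathSpecK_zero (α : ℕ × ℕ → 𝓞 K) : wreathSpecK K n α 0 = Polynomial.X := by
  simp [wreathSpecK, wreathSpec_zero]

lemma wreathSpecK_succ (α : ℕ × ℕ → 𝓞 K) (j : ℕ) :
    wreathSpecK K n α (j + 1) =
      (genPoly (n (j + 1)) (fun v => algebraMap (𝓞 K) K (α (j + 1, v)))).comp
        (wreathSpecK K n α j) := by
  rw [wreathSpecK, wreathSpec_succ, Polynomial.map_comp, genPoly_map]
  rfl

lemma wreathDeg_zero : wreathDeg n 0 = 1 := by
  simp [wreathDeg]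

lemma wreathDeg_succ (j : ℕ) : wreathDeg n (j + 1) = wreathDeg n j * n (j + 1) := by
  rw [wreathDeg, wreathDeg, Finset.prod_Icc_succ_top (by omega)]

lemma wreathDeg_pos {j : ℕ} (h : ∀ i, 1 ≤ i → i ≤ j → 1 ≤ n i) : 0 < wreathDeg n j := by
  apply Finset.prod_pos
  intro i hi
  obtain ⟨h1, h2⟩ := Finset.mem_Icc.1 hi
  exact h i h1 h2

lemma wreathSpec_monic_natDegree (α : ℕ × ℕ → 𝓞 K) {j : ℕ}
    (h : ∀ i, 1 ≤ i → i ≤ j → 1 ≤ n i) :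
    (wreathSpec K n α j).Monic ∧ (wreathSpec K n α j).natDegree = wreathDeg n j := by
  induction j with
  | zero => simp [wreathSpec_zero, wreathDeg_zero, monic_X]
  | succ j ih =>
    have h' : ∀ i, 1 ≤ i → i ≤ j → 1 ≤ n i := fun i h1 h2 => h i h1 (by omega)
    obtain ⟨hm, hd⟩ := ih h'
    have hn1 : 1 ≤ n (j + 1) := h (j + 1) (by omega) le_rfl
    rw [wreathSpec_succ]
    constructor
    · exact (genPoly_monic _ hn1 _).comp hm (by rw [hd]; exact (wreathDeg_pos h').ne')
    · rw [natDegree_comp, genPoly_natDegree _ hn1, hd, wreathDeg_succ, mul_comm]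

lemma wreathSpecK_monic_natDegree (α : ℕ × ℕ → 𝓞 K) {j : ℕ}
    (h : ∀ i, 1 ≤ i → i ≤ j → 1 ≤ n i) :
    (wreathSpecK K n α j).Monic ∧ (wreathSpecK K n α j).natDegree = wreathDeg n j := by
  obtain ⟨hm, hd⟩ := wreathSpec_monic_natDegree α h
  refine ⟨hm.map _, ?_⟩
  rw [wreathSpecK, hm.natDegree_map, hd]

lemma wreathSpec_congr {α α' : ℕ × ℕ → 𝓞 K} {j : ℕ}
    (h : ∀ u v, u ≤ j → α (u, v) = α' (u, v)) :
    wreathSpec K n α j = wreathSpec K n α' j := by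
  induction j with
  | zero => rw [wreathSpec_zero, wreathSpec_zero]
  | succ j ih =>
    rw [wreathSpec_succ, wreathSpec_succ,
      ih (fun u v hu => h u v (by omega))]
    congr 1
    unfold genPoly
    congr 1
    exact Finset.sum_congr rfl fun v _ => by simp only []; rw [h (j+1) v le_rfl]

end WreathLemmas

section GenPolyC
open Polynomial
variable {R : Type*} [CommRing R] [Nontrivial R]

lemma genPolyC_degree_C_lt (m : ℕ) (hm : 1 ≤ m) (c : ℕ → R) (d : R) :
    (Polynomial.C d).degree < (genPoly m c).degree := by
  apply lt_of_le_of_lt (Polynomial.degree_C_le)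
  rw [Polynomial.degree_eq_natDegree (genPoly_monic m hm c).ne_zero, genPoly_natDegree m hm]
  exact_mod_cast hm

lemma genPolyC_monic (m : ℕ) (hm : 1 ≤ m) (c : ℕ → R) (d : R) :
    (genPoly m c + Polynomial.C d).Monic :=
  (genPoly_monic m hm c).add_of_left (genPolyC_degree_C_lt m hm c d)

lemma genPolyC_natDegree (m : ℕ) (hm : 1 ≤ m) (c : ℕ → R) (d : R) :
    (genPoly m c + Polynomial.C d).natDegree = m := by
  rw [Polynomial.natDegree_eq_of_degree_eq
    (Polynomial.degree_add_eq_left_of_degree_lt (genPolyC_degree_C_lt m hm c d)),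
    genPoly_natDegree m hm]

lemma genPolyC_coeff_lt (m : ℕ) (hm : 1 ≤ m) (c : ℕ → R) (d : R) {v : ℕ}
    (hv : v ∈ Finset.Icc 1 m) (hvm : v < m) :
    (genPoly m c + Polynomial.C d).coeff (m - v) = c v := by
  rw [Polynomial.coeff_add, genPoly_coeff m hm c hv, Polynomial.coeff_C,
    if_neg (by omega), add_zero]

lemma genPolyC_coeff_zero (m : ℕ) (hm : 1 ≤ m) (c : ℕ → R) (d : R) :
    (genPoly m c + Polynomial.C d).coeff 0 = c m + d := by
  have h := genPoly_coeff m hm c (v := m) (Finset.mem_Icc.2 ⟨hm, le_rfl⟩)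
  rw [Nat.sub_self] at h
  rw [Polynomial.coeff_add, h, Polynomial.coeff_C_zero]

end GenPolyC

lemma wreathDeg_eq_prod_range (n : ℕ → ℕ) (k : ℕ) :
    wreathDeg n k = ∏ i ∈ Finset.range k, n (i + 1) := by
  induction k with
  | zero => simp [wreathDeg_zero]
  | succ k ih => rw [wreathDeg_succ, Finset.prod_range_succ, ih]

set_option maxHeartbeats 2000000 in
set_option synthInstance.maxHeartbeats 400000 in
open Polynomial IntermediateField in
/-- Injectivity of the map `Ψ'`: two points `α, α' ∈ 𝔛'(O_K;Y)` with the same chosen root,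
the same tower of fields `K(F_{j,·}(z))`, and the same constant terms `F_{j,·}(0)` for
`j ∈ [1, k−1]`, are equal. -/
theorem wreath_psi_injective (K : Type*) [Field K] [NumberField K] (k : ℕ) (hk : 2 ≤ k)
    (n : ℕ → ℕ) (hn : ∀ i ∈ Finset.Icc 1 k, 2 ≤ n i)
    (Y : ℝ) (hY : 0 < Y) (α α' : ℕ × ℕ → 𝓞 K)
    (hα : α ∈ wreathBox' K k n Y) (hα' : α' ∈ wreathBox' K k n Y)
    (z z' : AlgebraicClosure K)
    (hz : Polynomial.aeval z (wreathSpecK K n α k) = 0)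
    (hz' : Polynomial.aeval z' (wreathSpecK K n α' k) = 0)
    (h1 : z = z')
    (h2 : ∀ j ≤ k, IntermediateField.adjoin K
        ({Polynomial.aeval z (wreathSpecK K n α j)} : Set (AlgebraicClosure K)) =
      IntermediateField.adjoin K
        ({Polynomial.aeval z' (wreathSpecK K n α' j)} : Set (AlgebraicClosure K)))
    (h3 : ∀ j ∈ Finset.Icc 1 (k - 1),
      Polynomial.eval (0 : 𝓞 K) (wreathSpec K n α j) =
        Polynomial.eval (0 : 𝓞 K) (wreathSpec K n α' j)) :
    α = α' := by
  subst h1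
  classical
  obtain ⟨hbox, hirr, -⟩ := hα
  obtain ⟨hbox', hirr', -⟩ := hα'
  have hn1 : ∀ i, 1 ≤ i → i ≤ k → 1 ≤ n i := fun i hi1 hi2 =>
    le_trans (by omega) (hn i (Finset.mem_Icc.2 ⟨hi1, hi2⟩))
  set w : ℕ → AlgebraicClosure K := fun j => Polynomial.aeval z (wreathSpecK K n α j) with hwdef
  set w' : ℕ → AlgebraicClosure K := fun j => Polynomial.aeval z (wreathSpecK K n α' j) with hw'def
  set L : ℕ → IntermediateField K (AlgebraicClosure K) := fun j => IntermediateField.adjoin K {w j} with hLdef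
  set PK : ℕ → Polynomial K :=
    fun u => genPoly (n u) (fun v => algebraMap (𝓞 K) K (α (u, v))) with hPKdef
  set PK' : ℕ → Polynomial K :=
    fun u => genPoly (n u) (fun v => algebraMap (𝓞 K) K (α' (u, v))) with hPK'def
  have hint : ∀ x : AlgebraicClosure K, IsIntegral K x := fun x =>
    (Algebra.IsAlgebraic.isAlgebraic (R := K) x).isIntegral
  have hwsucc : ∀ j, w (j + 1) = Polynomial.aeval (w j) (PK (j + 1)) := by
    intro j
    show Polynomial.aeval z (wreathSpecK K n α (j + 1)) = _
    rw [wreathSpecK_succ, Polynomial.aeval_comp]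
  have hw'succ : ∀ j, w' (j + 1) = Polynomial.aeval (w' j) (PK' (j + 1)) := by
    intro j
    show Polynomial.aeval z (wreathSpecK K n α' (j + 1)) = _
    rw [wreathSpecK_succ, Polynomial.aeval_comp]
  have hmem : ∀ j (p : Polynomial K), Polynomial.aeval (w j) p ∈ L j := by
    intro j p
    apply IntermediateField.algebra_adjoin_le_adjoin K {w j}
    rw [Algebra.adjoin_singleton_eq_range_aeval]
    exact ⟨p, rfl⟩
  have hLle : ∀ j, L (j + 1) ≤ L j := by
    intro j
    apply IntermediateField.adjoin_simple_le_iff.2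
    rw [hwsucc j]
    exact hmem j _
  -- identification of relative ranks with minpoly degrees
  have hspecdeg : ∀ j, IntermediateField.extendScalars (hLle j) =
      IntermediateField.adjoin (L (j + 1)) {w j} := by
    intro j
    apply IntermediateField.restrictScalars_injective K
    rw [IntermediateField.extendScalars_restrictScalars, IntermediateField.restrictScalars_adjoin]
    apply le_antisymm
    · exact le_trans (by exact le_rfl)
        (IntermediateField.adjoin.mono K _ _ (Set.subset_union_right))
    · rw [IntermediateField.adjoin_le_iff]
      rintro x (hx | hx)
      · exact hLle j hx
      · rw [hx]
        exact IntermediateField.mem_adjoin_simple_self K (w j)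
  have he : ∀ j, IntermediateField.relfinrank (L (j + 1)) (L j) =
      (minpoly (L (j + 1)) (w j)).natDegree := by
    intro j
    rw [IntermediateField.relfinrank_eq_finrank_of_le (hLle j), hspecdeg j]
    exact IntermediateField.adjoin.finrank ((hint (w j)).tower_top)
  -- annihilating polynomials over `L (j+1)`
  have hq_facts : ∀ (β : ℕ × ℕ → 𝓞 K) (PB : ℕ → Polynomial K),
      (PB = fun u => genPoly (n u) (fun v => algebraMap (𝓞 K) K (β (u, v)))) →
      ∀ j, j + 1 ≤ k → ∀ (c : AlgebraicClosure K) (hc : c ∈ L (j + 1)),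
      ((PB (j + 1)).map (algebraMap K (L (j + 1))) + Polynomial.C (-(⟨c, hc⟩ : L (j + 1)))).Monic
      ∧ ((PB (j + 1)).map (algebraMap K (L (j + 1)))
          + Polynomial.C (-(⟨c, hc⟩ : L (j + 1)))).natDegree = n (j + 1) := by
    intro β PB hPB j hj c hc
    have hnj : 1 ≤ n (j + 1) := hn1 (j + 1) (by omega) hj
    rw [hPB]
    simp only [genPoly_map]
    exact ⟨genPolyC_monic _ hnj _ _, genPolyC_natDegree _ hnj _ _⟩
  -- the degree pinch
  have hEle : ∀ j, j + 1 ≤ k → (minpoly (L (j + 1)) (w j)).natDegree ≤ n (j + 1) := by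
    intro j hj
    have hcmem : w (j + 1) ∈ L (j + 1) := IntermediateField.mem_adjoin_simple_self K (w (j + 1))
    set q : Polynomial (L (j + 1)) := (PK (j + 1)).map (algebraMap K (L (j + 1)))
      + Polynomial.C (-(⟨w (j + 1), hcmem⟩ : L (j + 1))) with hqdef
    obtain ⟨hqm, hqd⟩ := hq_facts α PK hPKdef j hj (w (j + 1)) hcmem
    have hq0 : Polynomial.aeval (w j) q = 0 := by
      rw [hqdef, map_add, Polynomial.aeval_map_algebraMap, Polynomial.aeval_C, ← hwsucc j]
      simp
    calc (minpoly (L (j + 1)) (w j)).natDegree ≤ q.natDegree :=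
          Polynomial.natDegree_le_natDegree (minpoly.min _ _ hqm hq0)
      _ = n (j + 1) := hqd
  have hEpos : ∀ j, 0 < (minpoly (L (j + 1)) (w j)).natDegree := fun j =>
    minpoly.natDegree_pos ((hint (w j)).tower_top)
  -- chain and telescoping
  have hchain : ∀ i j, i ≤ j → L j ≤ L i := by
    intro i j hij
    induction j, hij using Nat.le_induction with
    | base => exact le_rfl
    | succ j hij ih => exact le_trans (hLle j) ih
  have hprod : ∀ j, j ≤ k → IntermediateField.relfinrank (L j) (L 0) =
      ∏ i ∈ Finset.range j, IntermediateField.relfinrank (L (i + 1)) (L i) := by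
    intro j hj
    induction j with
    | zero => simp
    | succ j ih =>
      rw [Finset.prod_range_succ, ← ih (by omega), mul_comm,
        IntermediateField.relfinrank_mul_relfinrank (hLle j) (hchain 0 j (by omega))]
  -- total degree
  have hw0 : w 0 = z := by
    show Polynomial.aeval z (wreathSpecK K n α 0) = z
    rw [wreathSpecK_zero]
    simp
  have hwk : w k = 0 := hz
  have hLk : L k = ⊥ := by
    show IntermediateField.adjoin K {w k} = ⊥
    rw [hwk]
    exact IntermediateField.adjoin_zero
  have hminz : minpoly K z = wreathSpecK K n α k :=
    (minpoly.eq_of_irreducible_of_monic hirr hz (wreathSpecK_monic_natDegree α hn1).1).symm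
  have hfin0 : Module.finrank K (L 0) = wreathDeg n k := by
    show Module.finrank K (IntermediateField.adjoin K {w 0}) = _
    rw [hw0]
    rw [IntermediateField.adjoin.finrank (hint z), hminz,
      (wreathSpecK_monic_natDegree α hn1).2]
  have htot : ∏ i ∈ Finset.range k, (minpoly (L (i + 1)) (w i)).natDegree =
      ∏ i ∈ Finset.range k, n (i + 1) := by
    have h1 := hprod k le_rfl
    rw [hLk, IntermediateField.relfinrank_bot_left, hfin0, wreathDeg_eq_prod_range] at h1
    exact (Finset.prod_congr rfl (fun i _ => (he i).symm)).trans h1.symm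
  have hEdeg : ∀ j, j + 1 ≤ k → (minpoly (L (j + 1)) (w j)).natDegree = n (j + 1) := by
    intro j hj
    by_contra hne
    have hlt : (minpoly (L (j + 1)) (w j)).natDegree < n (j + 1) :=
      lt_of_le_of_ne (hEle j hj) hne
    have := Finset.prod_lt_prod (f := fun i => (minpoly (L (i + 1)) (w i)).natDegree)
      (g := fun i => n (i + 1)) (s := Finset.range k)
      (fun i _ => hEpos i)
      (fun i hi => hEle i (by simpa using (Finset.mem_range.1 hi)))
      ⟨j, Finset.mem_range.2 (by omega), hlt⟩
    omega
  -- injectivity of coefficient maps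
  have hinjK : Function.Injective (algebraMap (𝓞 K) K) := IsFractionRing.injective _ _
  have hinjOmega : Function.Injective (algebraMap K (AlgebraicClosure K)) := (algebraMap K (AlgebraicClosure K)).injective
  -- main induction on rows
  have key : ∀ j, j ≤ k → ∀ u v, u ≤ j → α (u, v) = α' (u, v) := by
    intro j
    induction j with
    | zero =>
      intro _ u v hu
      have hu0 : u = 0 := by omega
      subst hu0
      rw [hbox.2 0 v (Or.inl (by simp)), hbox'.2 0 v (Or.inl (by simp))]
    | succ j ih =>
      intro hjk u v hu
      rcases Nat.lt_or_ge u (j + 1) with hcase | hcase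
      · exact ih (by omega) u v (by omega)
      have hu' : u = j + 1 := by omega
      subst hu'
      by_cases hv : v ∈ Finset.Icc 1 (n (j + 1))
      swap
      · rw [hbox.2 (j + 1) v (Or.inr hv), hbox'.2 (j + 1) v (Or.inr hv)]
      -- previous rows agree
      have hrows : ∀ p q, p ≤ j → α (p, q) = α' (p, q) := fun p q hp => ih (by omega) p q hp
      have hSpecEq : wreathSpec K n α j = wreathSpec K n α' j := wreathSpec_congr hrows
      have hwj : w' j = w j := by
        show Polynomial.aeval z (wreathSpecK K n α' j) = Polynomial.aeval z (wreathSpecK K n α j)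
        rw [wreathSpecK, wreathSpecK, hSpecEq]
      have hw'mem : w' (j + 1) ∈ L (j + 1) := by
        have hEq := (h2 (j + 1) hjk).symm
        show w' (j + 1) ∈ IntermediateField.adjoin K {w (j + 1)}
        rw [show IntermediateField.adjoin K {w (j+1)}
            = IntermediateField.adjoin K {w' (j+1)} from (hEq).symm]
        exact IntermediateField.mem_adjoin_simple_self K _
      have hcmem : w (j + 1) ∈ L (j + 1) := IntermediateField.mem_adjoin_simple_self K (w (j + 1))
      set q : Polynomial (L (j + 1)) := (PK (j + 1)).map (algebraMap K (L (j + 1)))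
        + Polynomial.C (-(⟨w (j + 1), hcmem⟩ : L (j + 1))) with hqdef
      set q' : Polynomial (L (j + 1)) := (PK' (j + 1)).map (algebraMap K (L (j + 1)))
        + Polynomial.C (-(⟨w' (j + 1), hw'mem⟩ : L (j + 1))) with hq'def
      obtain ⟨hqm, hqd⟩ := hq_facts α PK hPKdef j hjk (w (j + 1)) hcmem
      obtain ⟨hq'm, hq'd⟩ := hq_facts α' PK' hPK'def j hjk (w' (j + 1)) hw'mem
      have hq0 : Polynomial.aeval (w j) q = 0 := by
        rw [hqdef, map_add, Polynomial.aeval_map_algebraMap, Polynomial.aeval_C, ← hwsucc j]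
        simp
      have hq'0 : Polynomial.aeval (w j) q' = 0 := by
        rw [hq'def, map_add, Polynomial.aeval_map_algebraMap, Polynomial.aeval_C, ← hwj,
          ← hw'succ j]
        simp
      -- both equal the minimal polynomial
      have hdeg : (minpoly (L (j + 1)) (w j)).natDegree = n (j + 1) := hEdeg j hjk
      have hmin : ∀ (r : Polynomial (L (j + 1))), r.Monic → r.natDegree = n (j + 1) →
          Polynomial.aeval (w j) r = 0 → r = minpoly (L (j + 1)) (w j) := by
        intro r hrm hrd hr0
        refine (Polynomial.eq_of_dvd_of_natDegree_le_of_leadingCoeff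
          (minpoly.dvd _ _ hr0) (by rw [hrd, hdeg]) ?_).symm
        rw [(minpoly.monic ((hint (w j)).tower_top)).leadingCoeff, hrm.leadingCoeff]
      have hqq' : q = q' := by
        rw [hmin q hqm hqd hq0, hmin q' hq'm hq'd hq'0]
      have hcoeffL : ∀ i, q.coeff i = q'.coeff i := fun i => by rw [hqq']
      have hnj : 1 ≤ n (j + 1) := hn1 (j + 1) (by omega) hjk
      have hqg : q = genPoly (n (j + 1))
          (fun v => algebraMap K (L (j + 1)) (algebraMap (𝓞 K) K (α (j + 1, v))))
          + Polynomial.C (-(⟨w (j + 1), hcmem⟩ : L (j + 1))) := by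
        rw [hqdef, hPKdef]
        simp only [genPoly_map]
      have hq'g : q' = genPoly (n (j + 1))
          (fun v => algebraMap K (L (j + 1)) (algebraMap (𝓞 K) K (α' (j + 1, v))))
          + Polynomial.C (-(⟨w' (j + 1), hw'mem⟩ : L (j + 1))) := by
        rw [hq'def, hPK'def]
        simp only [genPoly_map]
      have hvlt : ∀ v', v' ∈ Finset.Icc 1 (n (j + 1)) → v' < n (j + 1) →
          α (j + 1, v') = α' (j + 1, v') := by
        intro v' hv' hv'lt
        have h := hcoeffL (n (j + 1) - v')
        rw [hqg, hq'g, genPolyC_coeff_lt _ hnj _ _ hv' hv'lt,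
          genPolyC_coeff_lt _ hnj _ _ hv' hv'lt] at h
        exact hinjK ((algebraMap K (L (j + 1))).injective h)
      have hlast : α (j + 1, n (j + 1)) = α' (j + 1, n (j + 1)) := by
        rcases eq_or_lt_of_le hjk with hjk1 | hjk1
        · -- top level : both roots are 0
          have hzk : w (j + 1) = 0 := by rw [hjk1]; exact hz
          have hzk' : w' (j + 1) = 0 := by rw [hjk1]; exact hz'
          have h0 := hcoeffL 0
          rw [hqg, hq'g, genPolyC_coeff_zero _ hnj, genPolyC_coeff_zero _ hnj] at h0
          have e1 : (⟨w (j + 1), hcmem⟩ : L (j + 1)) = 0 := Subtype.ext (by simpa using hzk)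
          have e2 : (⟨w' (j + 1), hw'mem⟩ : L (j + 1)) = 0 := Subtype.ext (by simpa using hzk')
          rw [e1, e2] at h0
          simp only [neg_zero, add_zero] at h0
          exact hinjK ((algebraMap K (L (j + 1))).injective h0)
        · -- intermediate level : use the constant terms
          have hc3 := h3 (j + 1) (Finset.mem_Icc.2 ⟨by omega, by omega⟩)
          rw [wreathSpec_succ, wreathSpec_succ, Polynomial.eval_comp, Polynomial.eval_comp,
            hSpecEq] at hc3
          simp only [genPoly_eval] at hc3
          have hsum := add_left_cancel hc3
          have hmem' : n (j + 1) ∈ Finset.Icc 1 (n (j + 1)) := Finset.mem_Icc.2 ⟨hnj, le_rfl⟩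
          rw [← Finset.sum_erase_add _ _ hmem', ← Finset.sum_erase_add _ _ hmem'] at hsum
          have herase : ∑ v' ∈ (Finset.Icc 1 (n (j + 1))).erase (n (j + 1)),
              α (j + 1, v') * (Polynomial.eval 0 (wreathSpec K n α' j)) ^ (n (j + 1) - v') =
              ∑ v' ∈ (Finset.Icc 1 (n (j + 1))).erase (n (j + 1)),
              α' (j + 1, v') * (Polynomial.eval 0 (wreathSpec K n α' j)) ^ (n (j + 1) - v') := by
            refine Finset.sum_congr rfl fun v' hv' => ?_
            obtain ⟨hne, hv'mem⟩ := Finset.mem_erase.1 hv'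
            rw [hvlt v' hv'mem (lt_of_le_of_ne (Finset.mem_Icc.1 hv'mem).2 hne)]
          rw [herase] at hsum
          have hfin := add_left_cancel hsum
          simpa [Nat.sub_self] using hfin
      obtain ⟨hv1, hv2⟩ := Finset.mem_Icc.1 hv
      rcases lt_or_eq_of_le hv2 with hvlt2 | hveq
      · exact hvlt v hv hvlt2
      · rw [hveq]
        exact hlast
  -- conclude
  funext uv
  obtain ⟨u, v⟩ := uv
  by_cases hu : u ∈ Finset.Icc 1 k
  · exact key k le_rfl u v (Finset.mem_Icc.1 hu).2
  · rw [hbox.2 u v (Or.inl hu), hbox'.2 u v (Or.inl hu)]
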